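/- arXiv:1905.04667 — 2 statements merged into one kernel-verified Lean document; each statement's English description precedes it below -/
import Mathlib

section
/- Let α be a type and let f, g : α → ℝ. Then f and g are comonotone if and only if there exist a function k : α → ℝ and nondecreasing functions h₁, h₂ : ℝ → ℝ such that f = h₁ ∘ k and g = h₂ ∘ k; moreover, k can be taken to be f + g. -/
/-- Two functions are comonotone if increments always agree in sign. -/
def Comonotone {α : Type*} (f g : α → ℝ) : Prop :=
  ∀ x x', 0 ≤ (f x - f x') * (g x - g x')

lemma comonotone_aux {α : Type*} [Nonempty α] {f g : α → ℝ} (hc : Comonotone f g) :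
    ∃ h₁ : ℝ → ℝ, Monotone h₁ ∧ f = h₁ ∘ (f + g) := by
  classical
  obtain ⟨x₀⟩ := ‹Nonempty α›
  set k : α → ℝ := f + g with hk
  have hkx : ∀ x, k x = f x + g x := fun x => rfl
  -- comonotone consequences
  have hfg : ∀ x x', f x < f x' → g x ≤ g x' := by
    intro x x' h
    by_contra hg
    push_neg at hg
    have := hc x x'
    nlinarith
  have key : ∀ x x', k x ≤ k x' → f x ≤ f x' := by
    intro x x' h
    by_contra hlt
    push_neg at hlt
    have hg : g x' ≤ g x := hfg x' x hlt
    rw [hkx, hkx] at h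
    linarith
  -- f is bounded above on sublevel sets of k
  have bdd : ∀ t : ℝ, BddAbove (f '' {x | k x ≤ t}) := by
    intro t
    refine ⟨max (f x₀) (t - g x₀), ?_⟩
    rintro y ⟨x, hx, rfl⟩
    rcases le_or_gt (f x) (f x₀) with h | h
    · exact le_max_of_le_left h
    · have hg : g x₀ ≤ g x := hfg x₀ x h
      have : f x ≤ t - g x₀ := by
        have := hkx x
        simp only [Set.mem_setOf_eq] at hx
        linarith
      exact le_max_of_le_right this
  let h₁ : ℝ → ℝ := fun t =>
    if ∃ x, k x ≤ t then sSup (f '' {x | k x ≤ t}) else sInf (Set.range f)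
  have hval : ∀ x, h₁ (k x) = f x := by
    intro x
    have he : ∃ x', k x' ≤ k x := ⟨x, le_refl _⟩
    simp only [h₁, if_pos he]
    refine le_antisymm ?_ ?_
    · refine csSup_le ⟨f x, ⟨x, show k x ≤ k x from le_refl _, rfl⟩⟩ ?_
      rintro y ⟨x', hx', rfl⟩
      exact key x' x hx'
    · exact le_csSup (bdd _) ⟨x, show k x ≤ k x from le_refl _, rfl⟩
  refine ⟨h₁, ?_, ?_⟩
  · intro t t' htt'
    by_cases he : ∃ x, k x ≤ t
    · have he' : ∃ x, k x ≤ t' := ⟨he.choose, le_trans he.choose_spec htt'⟩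
      simp only [h₁, if_pos he, if_pos he']
      refine csSup_le_csSup (bdd _) ⟨f he.choose, ⟨he.choose, he.choose_spec, rfl⟩⟩ ?_
      rintro y ⟨x, hx, rfl⟩
      exact ⟨x, le_trans hx htt', rfl⟩
    · by_cases he' : ∃ x, k x ≤ t'
      · simp only [h₁, if_neg he, if_pos he']
        push_neg at he
        obtain ⟨x₁, hx₁⟩ := he'
        have hbb : BddBelow (Set.range f) := by
          refine ⟨min (f x₀) (t - g x₀), ?_⟩
          rintro y ⟨x, rfl⟩
          rcases le_or_gt (f x₀) (f x) with h | h
          · exact le_trans (min_le_left _ _) h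
          · have hg : g x ≤ g x₀ := hfg x x₀ h
            have hkt : t ≤ k x := le_of_lt (he x)
            have : t - g x₀ ≤ f x := by
              have := hkx x
              linarith
            exact le_trans (min_le_right _ _) this
        calc sInf (Set.range f) ≤ f x₁ := csInf_le hbb ⟨x₁, rfl⟩
          _ ≤ sSup (f '' {x | k x ≤ t'}) := le_csSup (bdd _) ⟨x₁, hx₁, rfl⟩
      · simp only [h₁, if_neg he, if_neg he', le_refl]
  · funext x
    exact (hval x).symm

theorem comonotone_iff_common_increasing_factor {α : Type*} (f g : α → ℝ) :
    (Comonotone f g ↔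
      ∃ (k : α → ℝ) (h₁ h₂ : ℝ → ℝ), Monotone h₁ ∧ Monotone h₂ ∧
        f = h₁ ∘ k ∧ g = h₂ ∘ k) ∧
    (Comonotone f g →
      ∃ h₁ h₂ : ℝ → ℝ, Monotone h₁ ∧ Monotone h₂ ∧
        f = h₁ ∘ (f + g) ∧ g = h₂ ∘ (f + g)) := by
  have main : Comonotone f g →
      ∃ h₁ h₂ : ℝ → ℝ, Monotone h₁ ∧ Monotone h₂ ∧
        f = h₁ ∘ (f + g) ∧ g = h₂ ∘ (f + g) := by
    intro hc
    cases isEmpty_or_nonempty α with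
    | inl hempty =>
        refine ⟨id, id, monotone_id, monotone_id, ?_, ?_⟩ <;>
          · funext x; exact (IsEmpty.false x).elim
    | inr hne =>
        obtain ⟨h₁, hm₁, hf₁⟩ := comonotone_aux hc
        have hc' : Comonotone g f := by
          intro x x'; have := hc x x'; nlinarith
        obtain ⟨h₂, hm₂, hf₂⟩ := comonotone_aux hc'
        have hcomm : g + f = f + g := by
          funext x; exact add_comm _ _
        rw [hcomm] at hf₂
        exact ⟨h₁, h₂, hm₁, hm₂, hf₁, hf₂⟩
  constructor
  · constructor
    · intro hc
      obtain ⟨h₁, h₂, hm₁, hm₂, hf₁, hf₂⟩ := main hc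
      exact ⟨f + g, h₁, h₂, hm₁, hm₂, hf₁, hf₂⟩
    · rintro ⟨k, h₁, h₂, hm₁, hm₂, rfl, rfl⟩
      intro x x'
      simp only [Function.comp_apply]
      rcases le_total (k x) (k x') with h | h
      · have := hm₁ h; have := hm₂ h; nlinarith
      · have := hm₁ h; have := hm₂ h; nlinarith
  · exact main
end

section
/- Let α be a type and let f, g : α → ℝ. Then f and g are antimonotone if and only if f and −g are comonotone, and this holds if and only if there exist a function k : α → ℝ, a nondecreasing function h₁ : ℝ → ℝ and a nonincreasing function h₂ : ℝ → ℝ such that f = h₁ ∘ k and g = h₂ ∘ k. -/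
/-- Two functions are antimonotone if increments always disagree in sign. -/
def Antimonotone {α : Type*} (f g : α → ℝ) : Prop :=
  ∀ x x', (f x - f x') * (g x - g x') ≤ 0

theorem antimonotone_iff_comonotone_neg {α : Type*} (f g : α → ℝ) :
    Antimonotone f g ↔ Comonotone f (-g) := by
  refine forall₂_congr fun x x' => ?_
  simp only [Pi.neg_apply]
  constructor <;> intro h <;> linarith

namespace Comonotone

variable {α : Type*} {f e : α → ℝ}

theorem symm (h : Comonotone f e) : Comonotone e f :=
  fun x x' => (mul_comm (e x - e x') (f x - f x')) ▸ h x x'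

theorem le_and_le_of_add_le (h : Comonotone f e) {x y : α} (hxy : f x + e x ≤ f y + e y) :
    f x ≤ f y ∧ e x ≤ e y := by
  have hc := h x y
  constructor <;> by_contra! hlt <;> nlinarith

theorem sub_max_le_add_max (h : Comonotone f e) (t : ℝ) (x y : α) :
    f y - max (f y + e y - t) 0 ≤ f x + max (t - (f x + e x)) 0 := by
  have hl := le_max_left (f y + e y - t) 0
  have hl₀ := le_max_right (f y + e y - t) 0
  have hr := le_max_left (t - (f x + e x)) 0
  have hr₀ := le_max_right (t - (f x + e x)) 0
  rcases le_total (f y + e y) (f x + e x) with hyx | hxy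
  · linarith [(h.le_and_le_of_add_le hyx).1]
  · linarith [(h.le_and_le_of_add_le hxy).2]

theorem exists_monotone_comp_add (h : Comonotone f e) :
    ∃ φ : ℝ → ℝ, Monotone φ ∧ f = φ ∘ (f + e) := by
  set φ : ℝ → ℝ := fun t => ⨆ y, f y - max (f y + e y - t) 0
  have hbdd (t : ℝ) : BddAbove (Set.range fun y => f y - max (f y + e y - t) 0) := by
    rcases isEmpty_or_nonempty α with hα | ⟨⟨x⟩⟩
    · simp [Set.range_eq_empty]
    · exact ⟨_, Set.forall_mem_range.2 (h.sub_max_le_add_max t x)⟩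
  refine ⟨φ, fun t₁ t₂ ht => ciSup_mono (hbdd t₂) fun y => ?_, funext fun x => ?_⟩
  · gcongr
  · have : Nonempty α := ⟨x⟩
    refine le_antisymm (le_ciSup_of_le (hbdd _) x (by simp)) (ciSup_le fun y => ?_)
    simpa using h.sub_max_le_add_max (f x + e x) x y

end Comonotone

theorem antimonotone_comp_of_monotone_of_antitone {α : Type*} (k : α → ℝ) {h₁ h₂ : ℝ → ℝ}
    (hm : Monotone h₁) (ha : Antitone h₂) : Antimonotone (h₁ ∘ k) (h₂ ∘ k) := by
  intro x x'
  rcases le_total (k x) (k x') with hk | hk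
  · exact mul_nonpos_of_nonpos_of_nonneg (sub_nonpos.2 (hm hk)) (sub_nonneg.2 (ha hk))
  · exact mul_nonpos_of_nonneg_of_nonpos (sub_nonneg.2 (hm hk)) (sub_nonpos.2 (ha hk))

theorem antimonotone_iff_comonotone_neg_iff_common_factor {α : Type*} (f g : α → ℝ) :
    (Antimonotone f g ↔ Comonotone f (-g)) ∧
    (Antimonotone f g ↔
      ∃ (k : α → ℝ) (h₁ h₂ : ℝ → ℝ), Monotone h₁ ∧ Antitone h₂ ∧
        f = h₁ ∘ k ∧ g = h₂ ∘ k) := by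
  refine ⟨antimonotone_iff_comonotone_neg f g, ⟨fun H => ?_, ?_⟩⟩
  · have hc := (antimonotone_iff_comonotone_neg f g).1 H
    obtain ⟨h₁, hm₁, hf⟩ := hc.exists_monotone_comp_add
    obtain ⟨φ, hφ, hg⟩ := hc.symm.exists_monotone_comp_add
    refine ⟨f + -g, h₁, -φ, hm₁, hφ.neg, hf, ?_⟩
    rw [add_comm] at hg
    rw [Pi.neg_comp, ← hg, neg_neg]
  · rintro ⟨k, h₁, h₂, hm, ha, rfl, rfl⟩
    exact antimonotone_comp_of_monotone_of_antitone k hm ha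
end
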